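/- Let U ⊆ ℂ be a bounded connected open set, and let W_n, W ⊆ U be connected open sets with 0 ∈ W_n for all n and 0 ∈ W. Assume (W_n) converges to W in the kernel sense and that the set F associated to (W_n) and W has empty interior in ℂ. Then η_{W_n}(q) → η_W(q) for every q ∈ W. (This is Theorem 1.8(1) of the paper for the trivial single-leaf nonsingular foliation of U, whose unique leaf through any point is U itself.) -/

import Mathlib

open Filter Metric Topology Set

/-- The kernel of a sequence of open sets: the union over `n` of the connected
component containing `0` of the interior of `⋂ k ≥ n, W k`. -/
def seqKernel {X : Type*} [TopologicalSpace X] [Zero X] (W : ℕ → Set X) : Set X :=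
  ⋃ n, connectedComponentIn (interior (⋂ k, ⋂ (_ : n ≤ k), W k)) 0

/-- The set `F` associated to a sequence `(W n)` and a limit set `W₀`: points
outside `closure W₀` that are limits of points `p k ∈ W (n k) \ closure W₀`
along a strictly increasing sequence of indices. -/
def Fset {X : Type*} [TopologicalSpace X] (W : ℕ → Set X) (W₀ : Set X) : Set X :=
  {p | p ∉ closure W₀ ∧ ∃ nk : ℕ → ℕ, StrictMono nk ∧ ∃ pk : ℕ → X,
    (∀ k, pk k ∈ W (nk k) \ closure W₀) ∧ Tendsto pk atTop (nhds p)}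

/-- The modulus-of-uniformization function of a plane domain `Ω` (for the trivial
single-leaf foliation): the supremum of `|f'(0)|` over holomorphic maps
`f : 𝔻 → Ω` with `f 0 = p` (with `sSup ∅ = 0`). -/
noncomputable def eta (Ω : Set ℂ) (p : ℂ) : ℝ :=
  sSup {r : ℝ | ∃ f : ℂ → ℂ, DifferentiableOn ℂ f (ball (0 : ℂ) 1) ∧ f 0 = p ∧
    (∀ z ∈ ball (0 : ℂ) 1, f z ∈ Ω) ∧ r = ‖deriv f 0‖}

open Bornology

/-!
If `f` is a competitor for `W₀`, its restriction to a smaller disc has compact image in the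
kernel, hence in `W n` for all large `n`; rescaling loses only a factor close to `1`.
Conversely, competitors for `W n` with large derivative at `0` have, by Montel's theorem, a
subsequence converging on a smaller disc to a nonconstant limit. By Hurwitz's theorem every value
of the limit has a fixed neighbourhood eventually contained in the `W n` of the subsequence, so
the image of the limit lies in the kernel of the subsequence, which is `W₀`; rescaled, the limit
is a competitor for `W₀`.
-/

lemma exists_pos_lt_one_lt_mul {a x : ℝ} (h : a < x) : ∃ r, 0 < r ∧ r < 1 ∧ a < r * x := by
  have hlim : Tendsto (fun r : ℝ => r * x) (𝓝[<] 1) (𝓝 x) :=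
    ((continuous_id.mul continuous_const).tendsto' 1 x (one_mul x)).mono_left nhdsWithin_le_nhds
  obtain ⟨r, hr, ⟨hr0, hr1⟩⟩ :=
    ((hlim.eventually (lt_mem_nhds h)).and (Ioo_mem_nhdsLT zero_lt_one)).exists
  exact ⟨r, hr0, hr1, hr⟩

section Montel

/-- Schwarz's lemma on the discs `ball w (1 - r)`. -/
lemma dist_le_mul_dist_of_mapsTo_closedBall {f : ℂ → ℂ} {R r : ℝ} (hr : r < 1)
    (hf : DifferentiableOn ℂ f (ball 0 1)) (hfR : MapsTo f (ball 0 1) (closedBall 0 R))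
    {z w : ℂ} (hz : z ∈ closedBall (0 : ℂ) r) (hw : w ∈ closedBall (0 : ℂ) r) :
    dist (f z) (f w) ≤ 2 * R / (1 - r) * dist z w := by
  have hdist : ∀ x ∈ ball (0 : ℂ) 1, dist (f x) (f w) ≤ 2 * R := fun x hx =>
    (dist_triangle_right _ _ 0).trans <| by
      linarith [mem_closedBall_zero_iff.1 (hfR hx), mem_closedBall_zero_iff.1
        (hfR (closedBall_subset_ball hr hw)), dist_zero_right (f x), dist_zero_right (f w)]
  have hsub : ball w (1 - r) ⊆ ball 0 1 := fun x hx => by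
    rw [mem_ball_zero_iff]
    linarith [norm_le_norm_add_norm_sub' x w, mem_ball_iff_norm.1 hx,
      mem_closedBall_zero_iff.1 hw]
  rcases lt_or_ge (dist z w) (1 - r) with hzw | hzw
  · exact Complex.dist_le_div_mul_dist_of_mapsTo_ball (hf.mono hsub)
      (fun x hx => mem_closedBall.2 (hdist x (hsub hx))) hzw
  · calc dist (f z) (f w) ≤ 2 * R := hdist z (closedBall_subset_ball hr hz)
      _ = 2 * R / (1 - r) * (1 - r) := (div_mul_cancel₀ _ (sub_pos.2 hr).ne').symm
      _ ≤ 2 * R / (1 - r) * dist z w := by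
        have : 0 ≤ 2 * R := (dist_nonneg).trans (hdist z (closedBall_subset_ball hr hz))
        gcongr

/-- Montel's theorem on a closed subdisc, via Arzelà–Ascoli. -/
lemma exists_subseq_tendstoUniformlyOn_closedBall {f : ℕ → ℂ → ℂ} {R r : ℝ} (hr : r < 1)
    (hf : ∀ k, DifferentiableOn ℂ (f k) (ball 0 1))
    (hfR : ∀ k, MapsTo (f k) (ball 0 1) (closedBall 0 R)) :
    ∃ φ : ℕ → ℕ, StrictMono φ ∧ ∃ g : ℂ → ℂ,
      TendstoUniformlyOn (fun k => f (φ k)) g atTop (closedBall 0 r) := by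
  classical
  have : CompactSpace (closedBall (0 : ℂ) r) :=
    isCompact_iff_compactSpace.1 (isCompact_closedBall 0 r)
  have hsub : closedBall (0 : ℂ) r ⊆ ball 0 1 := closedBall_subset_ball hr
  let F : ℕ → BoundedContinuousFunction (closedBall (0 : ℂ) r) ℂ := fun k =>
    BoundedContinuousFunction.mkOfCompact ⟨(closedBall 0 r).domRestrict (f k),
      ((hf k).continuousOn.mono hsub).domRestrict⟩
  have hequi : Equicontinuous ((↑) : range F → closedBall (0 : ℂ) r → ℂ) := by
    refine equicontinuous_of_continuity_modulus (fun t => 2 * R / (1 - r) * t)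
      ((continuous_const.mul continuous_id).tendsto' 0 0 (mul_zero _)) _ ?_
    rintro x y ⟨_, k, rfl⟩
    exact dist_le_mul_dist_of_mapsTo_closedBall hr (hf k) (hfR k) x.2 y.2
  have hcomp : IsCompact (closure (range F)) :=
    BoundedContinuousFunction.arzela_ascoli (closedBall 0 R) (isCompact_closedBall 0 R) _
      (by rintro _ x ⟨k, rfl⟩; exact hfR k (hsub x.2)) hequi
  obtain ⟨G, -, φ, hφ, hlim⟩ := hcomp.isSeqCompact fun k => subset_closure (mem_range_self k)
  refine ⟨φ, hφ, fun z => if hz : z ∈ closedBall 0 r then G ⟨z, hz⟩ else 0, ?_⟩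
  rw [tendstoUniformlyOn_iff_tendstoUniformly_comp_coe]
  convert BoundedContinuousFunction.tendsto_iff_tendstoUniformly.1 hlim using 1
  · rfl
  · funext x
    simp only [Function.comp_apply, dif_pos x.2]

end Montel

section Hurwitz

lemma not_eventually_eq_of_deriv_ne_zero {f : ℂ → ℂ} {U : Set ℂ} {c z₀ : ℂ}
    (hU : IsOpen U) (hUc : IsPreconnected U) (hf : DifferentiableOn ℂ f U) (hc : c ∈ U)
    (hd : deriv f c ≠ 0) (hz₀ : z₀ ∈ U) : ¬∀ᶠ z in 𝓝 z₀, f z = f z₀ := by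
  refine fun hconst => hd ?_
  have heq := (hf.analyticOnNhd hU).eqOn_of_preconnected_of_eventuallyEq analyticOnNhd_const
    hUc hz₀ hconst
  rw [(eventuallyEq_of_mem (hU.mem_nhds hc) heq).deriv_eq, deriv_const]

lemma ball_subset_image_of_dist_lt {f g : ℂ → ℂ} {z₀ : ℂ} {r R δ : ℝ} (hr : 0 < r)
    (hrR : r < R) (hg : DifferentiableOn ℂ g (ball z₀ R))
    (hf : ∀ z ∈ sphere z₀ r, δ ≤ ‖f z - f z₀‖)
    (hfg : ∀ z ∈ closedBall z₀ r, dist (f z) (g z) < δ / 8) :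
    ball (f z₀) (δ / 8) ⊆ g '' closedBall z₀ r := by
  have hz₀ : z₀ ∈ closedBall z₀ r := mem_closedBall_self hr.le
  have hg_sphere : ∀ z ∈ sphere z₀ r, δ / 2 ≤ ‖g z - g z₀‖ := by
    intro z hz
    have hfz := hf z hz
    rw [← dist_eq_norm] at hfz ⊢
    linarith [hfg z (sphere_subset_closedBall hz), hfg z₀ hz₀,
      dist_nonneg.trans_lt (hfg z₀ hz₀),
      dist_triangle4 (f z) (g z) (g z₀) (f z₀), dist_comm (g z₀) (f z₀)]
  have hg_nonconst : ∃ᶠ z in 𝓝 z₀, g z ≠ g z₀ := not_eventually.1 fun hconst => by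
    have heq := (hg.analyticOnNhd isOpen_ball).eqOn_of_preconnected_of_eventuallyEq
      analyticOnNhd_const (convex_ball z₀ R).isPreconnected (mem_ball_self (hr.trans hrR)) hconst
    obtain ⟨w, hw⟩ : (sphere z₀ r).Nonempty := NormedSpace.sphere_nonempty.2 hr.le
    have := hg_sphere w hw
    rw [heq (sphere_subset_ball hrR hw), sub_self, norm_zero] at this
    linarith [dist_nonneg.trans_lt (hfg z₀ hz₀)]
  have hg_cl : DiffContOnCl ℂ g (ball z₀ r) :=
    (hg.mono (closure_ball z₀ hr.ne' ▸ closedBall_subset_ball hrR)).diffContOnCl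
  refine (ball_subset_ball' ?_).trans (hg_cl.ball_subset_image_closedBall hr hg_sphere hg_nonconst)
  linarith [hfg z₀ hz₀]

/-- A form of Hurwitz's theorem. -/
lemma eventually_ball_subset_image_of_tendstoLocallyUniformlyOn
    {U : Set ℂ} {g : ℕ → ℂ → ℂ} {f : ℂ → ℂ} {z₀ : ℂ} (hU : IsOpen U)
    (hg : ∀ k, DifferentiableOn ℂ (g k) U)
    (hlim : TendstoLocallyUniformlyOn g f atTop U) (hz₀ : z₀ ∈ U)
    (hnc : ¬∀ᶠ z in 𝓝 z₀, f z = f z₀) :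
    ∃ ε > 0, ∀ᶠ k in atTop, ball (f z₀) ε ⊆ g k '' U := by
  have hf : DifferentiableOn ℂ f U := hlim.differentiableOn (Eventually.of_forall hg) hU
  obtain ⟨R, hR, hRU, hne⟩ :
      ∃ R > 0, ball z₀ R ⊆ U ∧ ∀ z ∈ ball z₀ R, z ≠ z₀ → f z ≠ f z₀ := by
    have h := ((hf.analyticAt (hU.mem_nhds hz₀)).eventually_eq_or_eventually_ne
      analyticAt_const).resolve_left hnc
    rw [eventually_nhdsWithin_iff] at h
    obtain ⟨R, hR, hball⟩ := eventually_nhds_iff_ball.1 (h.and (hU.mem_nhds hz₀))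
    exact ⟨R, hR, fun z hz => (hball z hz).2, fun z hz => (hball z hz).1⟩
  have hr : 0 < R / 2 := half_pos hR
  have hrR : R / 2 < R := half_lt_self hR
  have hclU : closedBall z₀ (R / 2) ⊆ U := (closedBall_subset_ball hrR).trans hRU
  obtain ⟨w, hw, hwmin⟩ := (isCompact_sphere z₀ (R / 2)).exists_isMinOn
    (NormedSpace.sphere_nonempty.2 hr.le)
    ((hf.continuousOn.mono (sphere_subset_closedBall.trans hclU)).sub continuousOn_const).norm
  have hδ : 0 < ‖f w - f z₀‖ := norm_pos_iff.2 <| sub_ne_zero.2 <|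
    hne w (sphere_subset_ball hrR hw) (ne_of_mem_sphere hw hr.ne')
  have hclose := Metric.tendstoUniformlyOn_iff.1 ((tendstoLocallyUniformlyOn_iff_forall_isCompact
    hU).1 hlim _ hclU (isCompact_closedBall _ _)) _ (by positivity : 0 < ‖f w - f z₀‖ / 8)
  refine ⟨‖f w - f z₀‖ / 8, by positivity, hclose.mono fun k hk => ?_⟩
  exact (ball_subset_image_of_dist_lt hr hrR ((hg k).mono hRU) (fun z hz => hwmin hz) hk).trans
    (image_mono hclU)

end Hurwitz

section Kernel

variable {X : Type*} [TopologicalSpace X]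

lemma monotone_interior_iInter_ge (V : ℕ → Set X) :
    Monotone fun n => interior (⋂ k, ⋂ (_ : n ≤ k), V k) := fun _ _ hmn =>
  interior_mono fun _ hx => mem_iInter₂.2 fun k hk => mem_iInter₂.1 hx k (hmn.trans hk)

variable [Zero X]

lemma IsCompact.eventually_subset_of_subset_seqKernel {K : Set X} {V : ℕ → Set X}
    (hK : IsCompact K) (hKV : K ⊆ seqKernel V) : ∀ᶠ n in atTop, K ⊆ V n := by
  obtain ⟨n, hn⟩ := hK.elim_directed_cover _ (fun _ => isOpen_interior)
    (hKV.trans (iUnion_mono fun _ => connectedComponentIn_subset _ _))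
    (monotone_interior_iInter_ge V).directed_le
  exact eventually_atTop.2
    ⟨n, fun k hk => hn.trans (interior_subset.trans (iInter₂_subset k hk))⟩

variable [LocallyConnectedSpace X]

lemma isOpen_seqKernel (V : ℕ → Set X) : IsOpen (seqKernel V) :=
  isOpen_iUnion fun _ => isOpen_interior.connectedComponentIn

lemma IsPreconnected.subset_seqKernel {S : Set X} {V : ℕ → Set X} (hS : IsPreconnected S)
    (hmeet : (S ∩ seqKernel V).Nonempty)
    (hcover : S ⊆ ⋃ n, interior (⋂ k, ⋂ (_ : n ≤ k), V k)) : S ⊆ seqKernel V := by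
  refine hS.subset_of_closure_inter_subset (isOpen_seqKernel V) hmeet ?_
  rintro q ⟨hq_cl, hqS⟩
  obtain ⟨m, hm⟩ := mem_iUnion.1 (hcover hqS)
  obtain ⟨x, hxq, hx⟩ := mem_closure_iff.1 hq_cl _ isOpen_interior.connectedComponentIn
    (mem_connectedComponentIn hm)
  obtain ⟨n, hn⟩ := mem_iUnion.1 hx
  have hmono := monotone_interior_iInter_ge V
  have hx0 := connectedComponentIn_mono 0 (hmono (le_max_right m n)) hn
  have hxq' := connectedComponentIn_mono q (hmono (le_max_left m n)) hxq
  refine mem_iUnion.2 ⟨max m n, ?_⟩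
  rw [connectedComponentIn_eq hx0, ← connectedComponentIn_eq hxq']
  exact mem_connectedComponentIn (hmono (le_max_left m n) hm)

end Kernel

lemma image_subset_seqKernel_of_tendstoLocallyUniformlyOn {U : Set ℂ} {V : ℕ → Set ℂ}
    {g : ℕ → ℂ → ℂ} {f : ℂ → ℂ} (hU : IsOpen U) (hUc : IsPreconnected U)
    (hg : ∀ k, DifferentiableOn ℂ (g k) U) (hgV : ∀ k, MapsTo (g k) U (V k))
    (hlim : TendstoLocallyUniformlyOn g f atTop U)
    (hnc : ∀ z ∈ U, ¬∀ᶠ w in 𝓝 z, f w = f z)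
    (hmeet : (f '' U ∩ seqKernel V).Nonempty) : f '' U ⊆ seqKernel V := by
  have hf : DifferentiableOn ℂ f U := hlim.differentiableOn (Eventually.of_forall hg) hU
  refine (hUc.image f hf.continuousOn).subset_seqKernel hmeet ?_
  rintro _ ⟨z, hz, rfl⟩
  obtain ⟨ε, hε, hball⟩ :=
    eventually_ball_subset_image_of_tendstoLocallyUniformlyOn hU hg hlim hz (hnc z hz)
  obtain ⟨m, hm⟩ := eventually_atTop.1 hball
  exact mem_iUnion.2 ⟨m, mem_interior.2 ⟨ball (f z) ε,
    fun x hx => mem_iInter₂.2 fun k hk => (hgV k).image_subset (hm k hk hx),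
    isOpen_ball, mem_ball_self hε⟩⟩

section Eta

variable {Ω : Set ℂ} {p : ℂ}

lemma eta_nonneg (Ω : Set ℂ) (p : ℂ) : 0 ≤ eta Ω p :=
  Real.sSup_nonneg fun _ ⟨_, _, _, _, h⟩ => h ▸ norm_nonneg _

lemma exists_lt_norm_deriv_of_lt_eta {a : ℝ} (ha : 0 ≤ a) (h : a < eta Ω p) :
    ∃ f : ℂ → ℂ, DifferentiableOn ℂ f (ball 0 1) ∧ f 0 = p ∧
      MapsTo f (ball 0 1) Ω ∧ a < ‖deriv f 0‖ := by
  have hne : {r : ℝ | ∃ f : ℂ → ℂ, DifferentiableOn ℂ f (ball (0 : ℂ) 1) ∧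
      f 0 = p ∧ (∀ z ∈ ball (0 : ℂ) 1, f z ∈ Ω) ∧ r = ‖deriv f 0‖}.Nonempty := by
    by_contra hempty
    rw [not_nonempty_iff_eq_empty] at hempty
    rw [eta, hempty, Real.sSup_empty] at h
    exact h.not_ge ha
  obtain ⟨_, ⟨f, hf, hf0, hfΩ, rfl⟩, hlt⟩ := exists_lt_of_lt_csSup hne h
  exact ⟨f, hf, hf0, fun z hz => hfΩ z hz, hlt⟩

/-- Precomposing with `z ↦ ρ z` turns a holomorphic map on `ball 0 ρ` into a competitor
for `eta`. -/
lemma mul_norm_deriv_le_eta {f : ℂ → ℂ} {ρ : ℝ} (hΩ : IsBounded Ω) (hρ : 0 < ρ)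
    (hf : DifferentiableOn ℂ f (ball 0 ρ)) (hf0 : f 0 = p) (hfΩ : MapsTo f (ball 0 ρ) Ω) :
    ρ * ‖deriv f 0‖ ≤ eta Ω p := by
  obtain ⟨R, hR⟩ := hΩ.subset_closedBall p
  have hscale : MapsTo (fun z : ℂ => (ρ : ℂ) * z) (ball 0 1) (ball 0 ρ) := fun z hz => by
    rw [mem_ball_zero_iff, norm_mul, Complex.norm_real, Real.norm_of_nonneg hρ.le]
    simpa using mul_lt_mul_of_pos_left (mem_ball_zero_iff.1 hz) hρ
  have hderiv : ‖deriv (fun z : ℂ => f (ρ * z)) 0‖ = ρ * ‖deriv f 0‖ := by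
    rw [deriv_comp_mul_left, mul_zero, smul_eq_mul, norm_mul, Complex.norm_real,
      Real.norm_of_nonneg hρ.le]
  rw [← hderiv]
  refine le_csSup ⟨R, ?_⟩ ⟨_, hf.comp (differentiableOn_id.const_mul _) hscale,
    by simp [hf0], fun z hz => hfΩ (hscale hz), rfl⟩
  rintro _ ⟨g, hg, hg0, hgΩ, rfl⟩
  simpa [hg0] using Complex.norm_deriv_le_div_of_mapsTo_ball hg
    (fun z hz => hg0 ▸ hR (hgΩ z hz)) one_pos

end Eta

lemma eventually_lt_eta_of_lt_eta_seqKernel {U : Set ℂ} {W : ℕ → Set ℂ} {p : ℂ} {a : ℝ}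
    (hU : IsBounded U) (hWU : ∀ n, W n ⊆ U) (ha : a < eta (seqKernel W) p) :
    ∀ᶠ n in atTop, a < eta (W n) p := by
  rcases lt_or_ge a 0 with ha0 | ha0
  · exact Eventually.of_forall fun n => ha0.trans_le (eta_nonneg _ _)
  obtain ⟨f, hf, hf0, hfW, haf⟩ := exists_lt_norm_deriv_of_lt_eta ha0 ha
  obtain ⟨r, hr0, hr1, har⟩ := exists_pos_lt_one_lt_mul haf
  have hK : IsCompact (f '' closedBall 0 r) := (isCompact_closedBall 0 r).image_of_continuousOn
    (hf.continuousOn.mono (closedBall_subset_ball hr1))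
  filter_upwards [hK.eventually_subset_of_subset_seqKernel
    (hfW.mono_left (closedBall_subset_ball hr1)).image_subset] with n hn
  exact har.trans_le (mul_norm_deriv_le_eta (hU.subset (hWU n)) hr0
    (hf.mono (ball_subset_ball hr1.le)) hf0 fun z hz => hn (mem_image_of_mem f
      (ball_subset_closedBall hz)))

lemma mul_le_eta_of_forall_lt_eta {U W₀ : Set ℂ} {W : ℕ → Set ℂ} {p : ℂ} {b r : ℝ}
    (hU : IsBounded U) (hWU : ∀ n, W n ⊆ U) (hW₀ : IsBounded W₀) (hp : p ∈ W₀)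
    (hsub : ∀ σ : ℕ → ℕ, StrictMono σ → seqKernel (fun k => W (σ k)) = W₀)
    (hb : 0 < b) (hbW : ∀ n, b < eta (W n) p) (hr0 : 0 < r) (hr1 : r < 1) :
    r * b ≤ eta W₀ p := by
  obtain ⟨R, hR⟩ := hU.subset_closedBall 0
  choose f hf hf0 hfW hfb using fun n => exists_lt_norm_deriv_of_lt_eta hb.le (hbW n)
  obtain ⟨φ, hφ, g, hlim⟩ := exists_subseq_tendstoUniformlyOn_closedBall hr1 hf
    fun n => (hfW n).mono_right ((hWU n).trans hR)
  have hdiff : ∀ k, DifferentiableOn ℂ (f (φ k)) (ball 0 r) :=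
    fun k => (hf _).mono (ball_subset_ball hr1.le)
  have hlim' : TendstoLocallyUniformlyOn (fun k => f (φ k)) g atTop (ball 0 r) :=
    hlim.tendstoLocallyUniformlyOn.mono ball_subset_closedBall
  have hg : DifferentiableOn ℂ g (ball 0 r) :=
    hlim'.differentiableOn (Eventually.of_forall hdiff) isOpen_ball
  have h0 : (0 : ℂ) ∈ ball 0 r := mem_ball_self hr0
  have hg0 : g 0 = p := tendsto_nhds_unique (hlim'.tendsto_at h0) (by simp [hf0])
  have hbg : b ≤ ‖deriv g 0‖ := ge_of_tendsto'
    ((hlim'.deriv (Eventually.of_forall hdiff) isOpen_ball).tendsto_at h0).norm fun k => (hfb _).le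
  have hnc : ∀ z ∈ ball (0 : ℂ) r, ¬∀ᶠ w in 𝓝 z, g w = g z := fun z hz =>
    not_eventually_eq_of_deriv_ne_zero isOpen_ball (convex_ball 0 r).isPreconnected hg h0
      (norm_pos_iff.1 (hb.trans_le hbg)) hz
  have himg : g '' ball 0 r ⊆ W₀ := hsub φ hφ ▸
    image_subset_seqKernel_of_tendstoLocallyUniformlyOn isOpen_ball
      (convex_ball 0 r).isPreconnected hdiff
      (fun k => (hfW _).mono_left (ball_subset_ball hr1.le)) hlim' hnc
      ⟨p, ⟨0, h0, hg0⟩, (hsub φ hφ).symm ▸ hp⟩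
  calc r * b ≤ r * ‖deriv g 0‖ := by gcongr
    _ ≤ eta W₀ p :=
      mul_norm_deriv_le_eta hW₀ hr0 hg hg0 fun z hz => himg (mem_image_of_mem g hz)

theorem eta_pointwise_convergence_of_kernel_convergence_F_empty_interior_general
    (U : Set ℂ) (hUbdd : Bornology.IsBounded U)
    (W : ℕ → Set ℂ) (W₀ : Set ℂ)
    (hWU : ∀ n, W n ⊆ U)
    (hW₀U : W₀ ⊆ U)
    (hsub : ∀ σ : ℕ → ℕ, StrictMono σ → seqKernel (fun k => W (σ k)) = W₀) :
    ∀ p ∈ W₀, Tendsto (fun n => eta (W n) p) atTop (nhds (eta W₀ p)) := by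
  intro p hp
  have hker : seqKernel W = W₀ := hsub id strictMono_id
  refine tendsto_order.2 ⟨fun a ha => eventually_lt_eta_of_lt_eta_seqKernel hUbdd hWU
    (hker ▸ ha), fun a ha => ?_⟩
  by_contra hfreq
  obtain ⟨σ, hσ, hσa⟩ := extraction_of_frequently_atTop
    ((not_eventually.1 hfreq).mono fun _ => le_of_not_gt)
  obtain ⟨b, hLb, hba⟩ := exists_between ha
  obtain ⟨r, hr0, hr1, hLr⟩ := exists_pos_lt_one_lt_mul hLb
  have hrb : r * b ≤ eta W₀ p := mul_le_eta_of_forall_lt_eta hUbdd (fun n => hWU (σ n))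
    (hUbdd.subset hW₀U) hp (fun τ hτ => hsub _ (hσ.comp hτ))
    ((eta_nonneg _ _).trans_lt hLb) (fun n => hba.trans_le (hσa n)) hr0 hr1
  exact hLr.not_ge hrb

/-- Theorem 1.8(1) for the trivial single-leaf foliation of a bounded plane
domain `U`: if `(W n)` converges to `W₀` in the kernel sense and the set `F`
has empty interior in `ℂ`, then `η_{W n} q → η_{W₀} q` for every `q ∈ W₀`. -/
theorem eta_pointwise_convergence_of_kernel_convergence_F_empty_interior
    (U : Set ℂ) (hUopen : IsOpen U) (hUconn : IsConnected U)
    (hUbdd : Bornology.IsBounded U)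
    (W : ℕ → Set ℂ) (W₀ : Set ℂ)
    (hWopen : ∀ n, IsOpen (W n)) (hWconn : ∀ n, IsConnected (W n))
    (hWU : ∀ n, W n ⊆ U) (h0 : ∀ n, (0 : ℂ) ∈ W n)
    (hW₀open : IsOpen W₀) (hW₀conn : IsConnected W₀) (hW₀U : W₀ ⊆ U)
    (h0W₀ : (0 : ℂ) ∈ W₀)
    (hker : seqKernel W = W₀)
    (hsub : ∀ σ : ℕ → ℕ, StrictMono σ → seqKernel (fun k => W (σ k)) = W₀)
    (hF : interior (Fset W W₀) = ∅) :
    ∀ p ∈ W₀, Tendsto (fun n => eta (W n) p) atTop (nhds (eta W₀ p)) :=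
  eta_pointwise_convergence_of_kernel_convergence_F_empty_interior_general U hUbdd W W₀ hWU hW₀U
    hsub
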